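/- arXiv:1812.08604 — 6 statements merged into one kernel-verified Lean document; each statement's English description precedes it below -/
import Mathlib

section
/- In the setting of the Galois connection δ ⊣ ε with ε ∘ δ = id between a complete ortholattice L and a complete lattice D, the paraconsistent negation satisfies excluded middle: S ∨ S* = ⊤ for every S ∈ D. -/
theorem stmt8_general {L D : Type*} [CompleteLattice L] [CompleteLattice D]
    (compl : L → L)
    (h_em : ∀ a : L, a ⊔ compl a = ⊤)
    (δ : L → D) (ε : D → L)
    (hgc : ∀ a S, δ a ≤ S ↔ a ≤ ε S)
    (hδsup : ∀ a b : L, δ (a ⊔ b) = δ a ⊔ δ b)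
    (hδtop : δ ⊤ = ⊤)
    (S : D) :
    S ⊔ δ (compl (ε S)) = ⊤ := by
  have hδε : δ (ε S) ≤ S := (hgc _ _).mpr le_rfl
  refine top_le_iff.mp ?_
  calc ⊤ = δ (ε S ⊔ compl (ε S)) := by rw [h_em, hδtop]
    _ = δ (ε S) ⊔ δ (compl (ε S)) := hδsup _ _
    _ ≤ S ⊔ δ (compl (ε S)) := sup_le_sup_right hδε _

/-- Excluded middle for the paraconsistent negation: `S ⊔ S* = ⊤`, where
`S* := δ(ε(S)ᗮ)`. -/
theorem stmt8 {L D : Type*} [CompleteLattice L] [CompleteLattice D]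
    (compl : L → L)
    (h_inv : ∀ a, compl (compl a) = a)
    (h_anti : ∀ a b : L, a ≤ b → compl b ≤ compl a)
    (h_nc : ∀ a : L, a ⊓ compl a = ⊥)
    (h_em : ∀ a : L, a ⊔ compl a = ⊤)
    (δ : L → D) (ε : D → L)
    (hgc : ∀ a S, δ a ≤ S ↔ a ≤ ε S)
    (hεδ : ∀ a, ε (δ a) = a)
    (hδsup : ∀ a b : L, δ (a ⊔ b) = δ a ⊔ δ b)
    (hδtop : δ ⊤ = ⊤) (hδbot : δ ⊥ = ⊥)
    (S : D) :
    S ⊔ δ (compl (ε S)) = ⊤ :=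
  stmt8_general compl h_em δ ε hgc hδsup hδtop S
end

section
/- In the setting of the Galois connection δ ⊣ ε with ε ∘ δ = id, the operation S ⇒_S T := S* ∨ (S* ∨ T*)* on D mirrors the Sasaki conditional: δ(a →_S b) = δ(a) ⇒_S δ(b) for all a, b in L. -/
/-!
Since `ε ∘ δ = id`, the operation `*` transported along `δ` is just orthocomplementation:
`δ(a)* = δ(aᗮ)`. As `δ` preserves joins, `(δ(a)* ∨ δ(b)*)* = δ((aᗮ ∨ bᗮ)ᗮ) = δ(a ∧ b)` by
De Morgan and involutivity, and joining with `δ(a)* = δ(aᗮ)` gives `δ(aᗮ ∨ (a ∧ b))`.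
-/

theorem star_delta_eq_delta_compl {L D : Type*} (compl : L → L) (δ : L → D) (ε : D → L)
    (hεδ : ∀ a, ε (δ a) = a) (star : D → D) (hstar : ∀ S, star S = δ (compl (ε S))) (a : L) :
    star (δ a) = δ (compl a) := by
  rw [hstar, hεδ]

theorem stmt11_general {L D : Type*} [CompleteLattice L] [CompleteLattice D]
    (compl : L → L)
    (h_inv : ∀ a, compl (compl a) = a)
    (h_dm : ∀ a b : L, compl (a ⊓ b) = compl a ⊔ compl b)
    (δ : L → D) (ε : D → L)
    (hεδ : ∀ a, ε (δ a) = a)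
    (hδsup : ∀ a b : L, δ (a ⊔ b) = δ a ⊔ δ b)
    (star : D → D)
    (hstar : ∀ S, star S = δ (compl (ε S)))
    (a b : L) :
    δ (compl a ⊔ (a ⊓ b)) = star (δ a) ⊔ star (star (δ a) ⊔ star (δ b)) := by
  have hstarδ := star_delta_eq_delta_compl compl δ ε hεδ star hstar
  symm
  calc star (δ a) ⊔ star (star (δ a) ⊔ star (δ b))
      = δ (compl a) ⊔ star (δ (compl a ⊔ compl b)) := by rw [hstarδ a, hstarδ b, hδsup]
    _ = δ (compl a) ⊔ δ (a ⊓ b) := by rw [hstarδ, ← h_dm, h_inv]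
    _ = δ (compl a ⊔ (a ⊓ b)) := (hδsup _ _).symm

/-- The operation `S ⇒_S T := S* ⊔ (S* ⊔ T*)*` mirrors the Sasaki conditional:
`δ(a →_S b) = δ(a) ⇒_S δ(b)`, where `S* := δ(ε(S)ᗮ)` and `a →_S b := aᗮ ⊔ (a ⊓ b)`. -/
theorem stmt11 {L D : Type*} [CompleteLattice L] [CompleteLattice D]
    (compl : L → L)
    (h_inv : ∀ a, compl (compl a) = a)
    (h_anti : ∀ a b : L, a ≤ b → compl b ≤ compl a)
    (h_nc : ∀ a : L, a ⊓ compl a = ⊥)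
    (h_em : ∀ a : L, a ⊔ compl a = ⊤)
    (h_om : ∀ a b : L, a ≤ b → b = a ⊔ (b ⊓ compl a))
    (h_dm : ∀ a b : L, compl (a ⊓ b) = compl a ⊔ compl b)
    (δ : L → D) (ε : D → L)
    (hgc : ∀ a S, δ a ≤ S ↔ a ≤ ε S)
    (hεδ : ∀ a, ε (δ a) = a)
    (hδsup : ∀ a b : L, δ (a ⊔ b) = δ a ⊔ δ b)
    (star : D → D)
    (hstar : ∀ S, star S = δ (compl (ε S)))
    (a b : L) :
    δ (compl a ⊔ (a ⊓ b)) = star (δ a) ⊔ star (star (δ a) ⊔ star (δ b)) :=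
  stmt11_general compl h_inv h_dm δ ε hεδ hδsup star hstar a b
end

section
/- In the setting of the Galois connection δ ⊣ ε with ε ∘ δ = id, ε(S ⇒_S T) = ε(S) →_S ε(T) for all S, T ∈ D, where ⇒_S is defined by S ⇒_S T := S* ∨ (S* ∨ T*)*. -/
theorem stmt12_general {L D : Type*} [CompleteLattice L] [CompleteLattice D]
    (compl : L → L)
    (h_inv : ∀ a, compl (compl a) = a)
    (h_dm : ∀ a b : L, compl (a ⊓ b) = compl a ⊔ compl b)
    (δ : L → D) (ε : D → L)
    (hεδ : ∀ a, ε (δ a) = a)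
    (hδsup : ∀ a b : L, δ (a ⊔ b) = δ a ⊔ δ b)
    (star : D → D)
    (hstar : ∀ S, star S = δ (compl (ε S)))
    (S T : D) :
    ε (star S ⊔ star (star S ⊔ star T)) = compl (ε S) ⊔ (ε S ⊓ ε T) := by
  have star_sup_star : star S ⊔ star T = δ (compl (ε S) ⊔ compl (ε T)) := by
    rw [hstar, hstar, hδsup]
  have star_star_sup_star : star (star S ⊔ star T) = δ (ε S ⊓ ε T) := by
    rw [hstar, star_sup_star, hεδ, ← h_dm, h_inv]
  rw [star_star_sup_star, hstar S, ← hδsup, hεδ]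

/-- `ε(S ⇒_S T) = ε(S) →_S ε(T)`, where `S ⇒_S T := S* ⊔ (S* ⊔ T*)*`,
`S* := δ(ε(S)ᗮ)` and `a →_S b := aᗮ ⊔ (a ⊓ b)`. -/
theorem stmt12 {L D : Type*} [CompleteLattice L] [CompleteLattice D]
    (compl : L → L)
    (h_inv : ∀ a, compl (compl a) = a)
    (h_anti : ∀ a b : L, a ≤ b → compl b ≤ compl a)
    (h_nc : ∀ a : L, a ⊓ compl a = ⊥)
    (h_em : ∀ a : L, a ⊔ compl a = ⊤)
    (h_om : ∀ a b : L, a ≤ b → b = a ⊔ (b ⊓ compl a))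
    (h_dm : ∀ a b : L, compl (a ⊓ b) = compl a ⊔ compl b)
    (δ : L → D) (ε : D → L)
    (hgc : ∀ a S, δ a ≤ S ↔ a ≤ ε S)
    (hεδ : ∀ a, ε (δ a) = a)
    (hδsup : ∀ a b : L, δ (a ⊔ b) = δ a ⊔ δ b)
    (hεinf : ∀ S T : D, ε (S ⊓ T) = ε S ⊓ ε T)
    (star : D → D)
    (hstar : ∀ S, star S = δ (compl (ε S)))
    (S T : D) :
    ε (star S ⊔ star (star S ⊔ star T)) = compl (ε S) ⊔ (ε S ⊓ ε T) :=
  stmt12_general compl h_inv h_dm δ ε hεδ hδsup star hstar S T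
end

section
/- In the setting of the Galois connection δ ⊣ ε with ε ∘ δ = id, S commutes with T if and only if S** = (S* ∨ (T* ∧ T**))*, where commutation means ε(S) = (ε(S) ∧ ε(T)) ∨ (ε(S) ∧ ε(T)ᗮ). -/
/-!
Since `ε ∘ δ = id`, the double star is `S** = δ (ε S)`. Writing `a = ε S`, `b = ε T`, distributivity
of `D` and join-preservation of `δ` give `S* ⊔ (T* ⊓ T**) = δ (aᗮ ⊔ bᗮ) ⊓ δ (aᗮ ⊔ b)`, and `ε`
preserves meets, so by De Morgan `(S* ⊔ (T* ⊓ T**))* = δ ((a ⊓ b) ⊔ (a ⊓ bᗮ))`. The claim is then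
the injectivity of `δ`.
-/

theorem sup_inf_left_of_inf_sup_left {α : Type*} [Lattice α]
    (h : ∀ x y z : α, x ⊓ (y ⊔ z) = x ⊓ y ⊔ x ⊓ z) (x y z : α) :
    x ⊔ y ⊓ z = (x ⊔ y) ⊓ (x ⊔ z) := by
  let := DistribLattice.ofInfSupLe fun a b c => (h a b c).le
  exact sup_inf_left x y z

theorem compl_sup_of_involutive_of_compl_inf {L : Type*} [Lattice L] {compl : L → L}
    (h_inv : ∀ a, compl (compl a) = a) (h_dm : ∀ a b, compl (a ⊓ b) = compl a ⊔ compl b)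
    (a b : L) : compl (a ⊔ b) = compl a ⊓ compl b := by
  rw [← h_inv (compl a ⊓ compl b), h_dm, h_inv, h_inv]

theorem star_star_eq {L D : Type*} {compl : L → L} {δ : L → D} {ε : D → L} {star : D → D}
    (h_inv : ∀ a, compl (compl a) = a) (hεδ : ∀ a, ε (δ a) = a)
    (hstar : ∀ S, star S = δ (compl (ε S))) (S : D) :
    star (star S) = δ (ε S) := by
  rw [hstar, hstar, hεδ, h_inv]

theorem star_sup_star_inf_star_star_eq {L D : Type*} [Lattice L] [Lattice D] {compl : L → L}
    {δ : L → D} {ε : D → L} {star : D → D} (h_inv : ∀ a, compl (compl a) = a)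
    (h_dm : ∀ a b : L, compl (a ⊓ b) = compl a ⊔ compl b)
    (hdistr : ∀ x y z : D, x ⊓ (y ⊔ z) = (x ⊓ y) ⊔ (x ⊓ z))
    (hεδ : ∀ a, ε (δ a) = a) (hδsup : ∀ a b : L, δ (a ⊔ b) = δ a ⊔ δ b)
    (hεinf : ∀ S T : D, ε (S ⊓ T) = ε S ⊓ ε T)
    (hstar : ∀ S, star S = δ (compl (ε S))) (S T : D) :
    star (star S ⊔ (star T ⊓ star (star T))) =
      δ ((ε S ⊓ ε T) ⊔ (ε S ⊓ compl (ε T))) := by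
  have hjoin : star S ⊔ (star T ⊓ star (star T)) =
      δ (compl (ε S) ⊔ compl (ε T)) ⊓ δ (compl (ε S) ⊔ ε T) := by
    rw [star_star_eq h_inv hεδ hstar, hstar S, hstar T, sup_inf_left_of_inf_sup_left hdistr,
      ← hδsup, ← hδsup]
  rw [hstar, hjoin, hεinf, hεδ, hεδ, h_dm, compl_sup_of_involutive_of_compl_inf h_inv h_dm,
    compl_sup_of_involutive_of_compl_inf h_inv h_dm, h_inv, h_inv]

theorem stmt16_general {L D : Type*} [CompleteLattice L] [CompleteLattice D]
    (compl : L → L)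
    (h_inv : ∀ a, compl (compl a) = a)
    (h_dm : ∀ a b : L, compl (a ⊓ b) = compl a ⊔ compl b)
    (hdistr : ∀ x y z : D, x ⊓ (y ⊔ z) = (x ⊓ y) ⊔ (x ⊓ z))
    (δ : L → D) (ε : D → L)
    (hεδ : ∀ a, ε (δ a) = a)
    (hδinj : Function.Injective δ)
    (hδsup : ∀ a b : L, δ (a ⊔ b) = δ a ⊔ δ b)
    (hεinf : ∀ S T : D, ε (S ⊓ T) = ε S ⊓ ε T)
    (star : D → D)
    (hstar : ∀ S, star S = δ (compl (ε S)))
    (S T : D) :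
    (ε S = (ε S ⊓ ε T) ⊔ (ε S ⊓ compl (ε T))) ↔
      star (star S) = star (star S ⊔ (star T ⊓ star (star T))) := by
  rw [star_star_eq h_inv hεδ hstar,
    star_sup_star_inf_star_star_eq h_inv h_dm hdistr hεδ hδsup hεinf hstar]
  exact hδinj.eq_iff.symm

/-- `S` commutes with `T` (i.e. `ε(S) = (ε(S) ⊓ ε(T)) ⊔ (ε(S) ⊓ ε(T)ᗮ)`) iff
`S** = (S* ⊔ (T* ⊓ T**))*`, where `S* := δ(ε(S)ᗮ)`. -/
theorem stmt16 {L D : Type*} [CompleteLattice L] [CompleteLattice D]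
    (compl : L → L)
    (h_inv : ∀ a, compl (compl a) = a)
    (h_anti : ∀ a b : L, a ≤ b → compl b ≤ compl a)
    (h_nc : ∀ a : L, a ⊓ compl a = ⊥)
    (h_em : ∀ a : L, a ⊔ compl a = ⊤)
    (h_om : ∀ a b : L, a ≤ b → b = a ⊔ (b ⊓ compl a))
    (h_dm : ∀ a b : L, compl (a ⊓ b) = compl a ⊔ compl b)
    (hdistr : ∀ x y z : D, x ⊓ (y ⊔ z) = (x ⊓ y) ⊔ (x ⊓ z))
    (δ : L → D) (ε : D → L)
    (hgc : ∀ a S, δ a ≤ S ↔ a ≤ ε S)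
    (hεδ : ∀ a, ε (δ a) = a)
    (hδinj : Function.Injective δ)
    (hδsup : ∀ a b : L, δ (a ⊔ b) = δ a ⊔ δ b)
    (hεinf : ∀ S T : D, ε (S ⊓ T) = ε S ⊓ ε T)
    (star : D → D)
    (hstar : ∀ S, star S = δ (compl (ε S)))
    (S T : D) :
    (ε S = (ε S ⊓ ε T) ⊔ (ε S ⊓ compl (ε T))) ↔
      star (star S) = star (star S ⊔ (star T ⊓ star (star T))) :=
  stmt16_general compl h_inv h_dm hdistr δ ε hεδ hδinj hδsup hεinf star hstar S T
end

section
/- Assume L is a complete orthomodular lattice in which an element a commutes with every element only if a ∈ {⊥, ⊤} (e.g. L is an irreducible projection lattice P(H) with dim H ≥ 2). Then for all a ∈ L, δ(a) ∧ δ(a)* = ⊥ in D if and only if a = ⊤ or a = ⊥. -/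
/-!
If `δ a` and `δ aᗮ` are disjoint, then `a` commutes with every `x`. Indeed, put
`q := a ⊓ ((a ⊓ x) ⊔ (a ⊓ xᗮ))ᗮ`; by De Morgan `q ≤ aᗮ ⊔ x` and `q ≤ aᗮ ⊔ xᗮ`, so distributivity
of `D` together with `q ≤ a` gives `δ q ≤ δ x ⊓ δ xᗮ`. Applying the right adjoint `ε`, which
preserves meets and satisfies `ε ∘ δ = id`, yields `q ≤ x ⊓ xᗮ = ⊥`, and orthomodularity turns
`q = ⊥` into `a = (a ⊓ x) ⊔ (a ⊓ xᗮ)`. Since the center is trivial, `a` is `⊥` or `⊤`; the converse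
holds because `δ ⊥ = ⊥` and `⊤ᗮ = ⊥`.
-/

theorem le_of_le_sup_of_disjoint {D : Type*} [Lattice D] [OrderBot D]
    (hdistr : ∀ x y z : D, x ⊓ (y ⊔ z) = (x ⊓ y) ⊔ (x ⊓ z)) {u v w : D}
    (h : u ≤ v ⊔ w) (hd : Disjoint u v) : u ≤ w :=
  letI : DistribLattice D := DistribLattice.ofInfSupLe fun x y z => (hdistr x y z).le
  hd.left_le_of_le_sup_left h

section Orthocomplement

variable {L : Type*} [Lattice L] {compl : L → L}

theorem compl_inf_le_compl_sup_compl (h_inv : ∀ a, compl (compl a) = a)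
    (h_anti : ∀ a b : L, a ≤ b → compl b ≤ compl a) (u v : L) :
    compl (u ⊓ v) ≤ compl u ⊔ compl v := by
  have h : compl (compl u ⊔ compl v) ≤ u ⊓ v :=
    le_inf (by simpa [h_inv] using h_anti _ _ (le_sup_left : compl u ≤ compl u ⊔ compl v))
      (by simpa [h_inv] using h_anti _ _ (le_sup_right : compl v ≤ compl u ⊔ compl v))
  simpa [h_inv] using h_anti _ _ h

theorem eq_of_le_of_inf_compl_eq_bot [OrderBot L]
    (h_om : ∀ a b : L, a ≤ b → b = a ⊔ (b ⊓ compl a)) {p a : L} (hp : p ≤ a)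
    (h : a ⊓ compl p = ⊥) : a = p :=
  (h_om p a hp).trans (by rw [h, sup_bot_eq])

variable {D : Type*} [Lattice D] [OrderBot D] {δ : L → D} {ε : D → L}

theorem map_le_of_le_of_le_compl_sup (hdistr : ∀ x y z : D, x ⊓ (y ⊔ z) = (x ⊓ y) ⊔ (x ⊓ z))
    (gc : GaloisConnection δ ε) {a q y : L} (ha : Disjoint (δ a) (δ (compl a)))
    (hqa : q ≤ a) (hqy : q ≤ compl a ⊔ y) : δ q ≤ δ y :=
  le_of_le_sup_of_disjoint hdistr (gc.l_sup ▸ gc.monotone_l hqy)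
    (ha.mono_left (gc.monotone_l hqa))

theorem eq_inf_sup_inf_compl_of_disjoint_map [OrderBot L]
    (h_inv : ∀ a, compl (compl a) = a) (h_anti : ∀ a b : L, a ≤ b → compl b ≤ compl a)
    (h_nc : ∀ a : L, a ⊓ compl a = ⊥) (h_om : ∀ a b : L, a ≤ b → b = a ⊔ (b ⊓ compl a))
    (hdistr : ∀ x y z : D, x ⊓ (y ⊔ z) = (x ⊓ y) ⊔ (x ⊓ z))
    (gc : GaloisConnection δ ε) (hεδ : ∀ a, ε (δ a) = a)
    {a : L} (ha : Disjoint (δ a) (δ (compl a))) (x : L) :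
    a = (a ⊓ x) ⊔ (a ⊓ compl x) := by
  have de_morgan := compl_inf_le_compl_sup_compl h_inv h_anti
  set q := a ⊓ compl ((a ⊓ x) ⊔ (a ⊓ compl x))
  have hqa : q ≤ a := inf_le_left
  have hqx : q ≤ compl a ⊔ x := by
    simpa [h_inv] using inf_le_right.trans ((h_anti _ _ le_sup_right).trans (de_morgan a (compl x)))
  have hqx' : q ≤ compl a ⊔ compl x :=
    inf_le_right.trans ((h_anti _ _ le_sup_left).trans (de_morgan a x))
  have hq : q ≤ x ⊓ compl x :=
    calc q ≤ ε (δ x ⊓ δ (compl x)) :=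
          gc.le_u (le_inf (map_le_of_le_of_le_compl_sup hdistr gc ha hqa hqx)
            (map_le_of_le_of_le_compl_sup hdistr gc ha hqa hqx'))
      _ = x ⊓ compl x := by rw [gc.u_inf, hεδ, hεδ]
  exact eq_of_le_of_inf_compl_eq_bot h_om (sup_le inf_le_left inf_le_left)
    (le_bot_iff.mp (hq.trans (h_nc x).le))

end Orthocomplement

theorem stmt17_general {L D : Type*} [CompleteLattice L] [CompleteLattice D]
    (compl : L → L)
    (h_inv : ∀ a, compl (compl a) = a)
    (h_anti : ∀ a b : L, a ≤ b → compl b ≤ compl a)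
    (h_nc : ∀ a : L, a ⊓ compl a = ⊥)
    (h_om : ∀ a b : L, a ≤ b → b = a ⊔ (b ⊓ compl a))
    (hcenter : ∀ a : L, (∀ x : L, a = (a ⊓ x) ⊔ (a ⊓ compl x)) → a = ⊥ ∨ a = ⊤)
    (hdistr : ∀ x y z : D, x ⊓ (y ⊔ z) = (x ⊓ y) ⊔ (x ⊓ z))
    (δ : L → D) (ε : D → L)
    (hgc : ∀ a S, δ a ≤ S ↔ a ≤ ε S)
    (hεδ : ∀ a, ε (δ a) = a)
    (star : D → D)
    (hstar : ∀ S, star S = δ (compl (ε S)))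
    (a : L) :
    δ a ⊓ star (δ a) = ⊥ ↔ a = ⊤ ∨ a = ⊥ := by
  have gc : GaloisConnection δ ε := hgc
  rw [hstar, hεδ]
  constructor
  · intro ha
    exact (hcenter a (eq_inf_sup_inf_compl_of_disjoint_map h_inv h_anti h_nc h_om hdistr gc hεδ
      (disjoint_iff.mpr ha))).symm
  · rintro (rfl | rfl)
    · have compl_top : compl (⊤ : L) = ⊥ := by simpa using h_nc ⊤
      rw [compl_top, gc.l_bot, inf_bot_eq]
    · rw [gc.l_bot, bot_inf_eq]

/-- If the center of `L` is `{⊥, ⊤}`, then `δ(a) ⊓ δ(a)* = ⊥` iff `a = ⊤ ∨ a = ⊥`. -/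
theorem stmt17 {L D : Type*} [CompleteLattice L] [CompleteLattice D]
    (compl : L → L)
    (h_inv : ∀ a, compl (compl a) = a)
    (h_anti : ∀ a b : L, a ≤ b → compl b ≤ compl a)
    (h_nc : ∀ a : L, a ⊓ compl a = ⊥)
    (h_em : ∀ a : L, a ⊔ compl a = ⊤)
    (h_om : ∀ a b : L, a ≤ b → b = a ⊔ (b ⊓ compl a))
    (hcenter : ∀ a : L, (∀ x : L, a = (a ⊓ x) ⊔ (a ⊓ compl x)) → a = ⊥ ∨ a = ⊤)
    (hdistr : ∀ x y z : D, x ⊓ (y ⊔ z) = (x ⊓ y) ⊔ (x ⊓ z))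
    (δ : L → D) (ε : D → L)
    (hgc : ∀ a S, δ a ≤ S ↔ a ≤ ε S)
    (hεδ : ∀ a, ε (δ a) = a)
    (hδinj : Function.Injective δ)
    (hεinf : ∀ S T : D, ε (S ⊓ T) = ε S ⊓ ε T)
    (star : D → D)
    (hstar : ∀ S, star S = δ (compl (ε S)))
    (a : L) :
    δ a ⊓ star (δ a) = ⊥ ↔ a = ⊤ ∨ a = ⊥ :=
  stmt17_general compl h_inv h_anti h_nc h_om hcenter hdistr δ ε hgc hεδ star hstar a
end

section
/- Under the same hypotheses (center of L is {⊥,⊤}), the negation * on D is properly paraconsistent: for any S ∈ D, S ∧ S* = ⊥ if and only if S = ⊤ or S = ⊥. -/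
/-!
Put `a := ε S`. Since `δ a ≤ S` and `S* = δ a'`, the hypothesis `S ⊓ S* = ⊥` makes `δ a` and
`δ a'` disjoint. Distributivity of `D`, pulled back along `ε` (which preserves meets and inverts
`δ`), turns this into `(a ⊔ b) ⊓ a' = b ⊓ a'` for every `b`; by orthomodularity every element then
commutes with `a`, so `a` is central, hence `⊥` (and then `S* = ⊤`, so `S = ⊥`) or `⊤` (and then
`S ≥ δ ⊤ = ⊤`).
-/

structure IsOrthomodular {L : Type*} [Lattice L] [BoundedOrder L] (compl : L → L) : Prop where
  compl_compl : ∀ a, compl (compl a) = a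
  compl_anti : ∀ a b, a ≤ b → compl b ≤ compl a
  inf_compl : ∀ a, a ⊓ compl a = ⊥
  sup_compl : ∀ a, a ⊔ compl a = ⊤
  orthomodular : ∀ a b, a ≤ b → b = a ⊔ (b ⊓ compl a)

def OrthoCommutes {L : Type*} [Lattice L] (compl : L → L) (a b : L) : Prop :=
  a = (a ⊓ b) ⊔ (a ⊓ compl b)

namespace IsOrthomodular

variable {L : Type*} [Lattice L] [BoundedOrder L] {compl : L → L}

theorem le_compl_comm (hL : IsOrthomodular compl) {a b : L} (h : a ≤ compl b) : b ≤ compl a := by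
  simpa only [hL.compl_compl] using hL.compl_anti _ _ h

theorem compl_sup (hL : IsOrthomodular compl) (a b : L) :
    compl (a ⊔ b) = compl a ⊓ compl b :=
  le_antisymm (le_inf (hL.compl_anti _ _ le_sup_left) (hL.compl_anti _ _ le_sup_right))
    (hL.le_compl_comm (sup_le (hL.le_compl_comm inf_le_left) (hL.le_compl_comm inf_le_right)))

theorem compl_bot (hL : IsOrthomodular compl) : compl ⊥ = ⊤ := by
  simpa only [bot_sup_eq] using hL.sup_compl ⊥

theorem compl_top (hL : IsOrthomodular compl) : compl ⊤ = ⊥ := by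
  simpa only [top_inf_eq] using hL.inf_compl ⊤

theorem orthoCommutes_symm (hL : IsOrthomodular compl) {p q : L}
    (h : OrthoCommutes compl p q) : OrthoCommutes compl q p := by
  have hq : q ⊓ compl (p ⊓ q) = q ⊓ compl p := by
    refine le_antisymm (le_inf inf_le_left ?_) (inf_le_inf_left q (hL.compl_anti _ _ inf_le_left))
    have hq' : q ≤ compl (p ⊓ compl q) := hL.le_compl_comm inf_le_right
    calc q ⊓ compl (p ⊓ q) ≤ compl (p ⊓ q) ⊓ compl (p ⊓ compl q) :=
          le_inf inf_le_right (inf_le_left.trans hq')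
      _ = compl p := by rw [← hL.compl_sup, ← h]
  have := hL.orthomodular (p ⊓ q) q inf_le_right
  rwa [hq, inf_comm p q] at this

/-- The relative complement of `x ⊓ a ⊔ x ⊓ a'` in `x` meets neither `a` nor `a'`, so by `ha` it
lies below `a`, hence vanishes. -/
theorem orthoCommutes_of_sup_inf_compl (hL : IsOrthomodular compl) {a : L}
    (ha : ∀ b, (a ⊔ b) ⊓ compl a = b ⊓ compl a) (x : L) : OrthoCommutes compl x a := by
  set c := (x ⊓ a) ⊔ (x ⊓ compl a)
  set e := x ⊓ compl c
  have hdisj : ∀ y, x ⊓ y ≤ c → e ⊓ y = ⊥ := fun y hy =>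
    le_bot_iff.mp <| (le_inf ((inf_le_inf_right y inf_le_left).trans hy)
      (inf_le_left.trans inf_le_right)).trans (hL.inf_compl c).le
  have hea : e ⊓ a = ⊥ := hdisj a le_sup_left
  have hea' : e ⊓ compl a = ⊥ := hdisj (compl a) le_sup_right
  have hsup : a ⊔ e = a := by
    have := hL.orthomodular a (a ⊔ e) le_sup_left
    rwa [ha, hea', sup_bot_eq] at this
  have he : e = ⊥ := by rw [← hea, inf_eq_left.mpr (sup_eq_left.mp hsup)]
  have hx : x = c ⊔ e := hL.orthomodular c x (sup_le inf_le_left inf_le_left)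
  rwa [he, sup_bot_eq] at hx

end IsOrthomodular

theorem GaloisCoinsertion.sup_inf_eq_inf_of_disjoint {α β : Type*} [Lattice α] [DistribLattice β]
    [OrderBot β] {l : α → β} {u : β → α} (gci : GaloisCoinsertion l u) {a c : α}
    (h : Disjoint (l a) (l c)) (b : α) : (a ⊔ b) ⊓ c = b ⊓ c := by
  have hl : l (a ⊔ b) ⊓ l c = l b ⊓ l c := by
    rw [gci.gc.l_sup, inf_sup_right, h.eq_bot, bot_sup_eq]
  rw [← gci.u_inf_l, hl, gci.u_inf_l]

theorem eq_bot_or_eq_top_of_disjoint_map_compl {L D : Type*} [Lattice L] [BoundedOrder L]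
    [DistribLattice D] [OrderBot D] {compl : L → L} (hL : IsOrthomodular compl)
    (hcenter : ∀ a, (∀ x, OrthoCommutes compl a x) → a = ⊥ ∨ a = ⊤)
    {δ : L → D} {ε : D → L} (gci : GaloisCoinsertion δ ε) {a : L}
    (h : Disjoint (δ a) (δ (compl a))) : a = ⊥ ∨ a = ⊤ :=
  hcenter a fun x => hL.orthoCommutes_symm <|
    hL.orthoCommutes_of_sup_inf_compl (gci.sup_inf_eq_inf_of_disjoint h) x

theorem stmt18_general {L D : Type*} [CompleteLattice L] [CompleteLattice D]
    (compl : L → L)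
    (h_inv : ∀ a, compl (compl a) = a)
    (h_anti : ∀ a b : L, a ≤ b → compl b ≤ compl a)
    (h_nc : ∀ a : L, a ⊓ compl a = ⊥)
    (h_em : ∀ a : L, a ⊔ compl a = ⊤)
    (h_om : ∀ a b : L, a ≤ b → b = a ⊔ (b ⊓ compl a))
    (hcenter : ∀ a : L, (∀ x : L, a = (a ⊓ x) ⊔ (a ⊓ compl x)) → a = ⊥ ∨ a = ⊤)
    (hdistr : ∀ x y z : D, x ⊓ (y ⊔ z) = (x ⊓ y) ⊔ (x ⊓ z))
    (δ : L → D) (ε : D → L)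
    (hgc : ∀ a S, δ a ≤ S ↔ a ≤ ε S)
    (hεδ : ∀ a, ε (δ a) = a)
    (hδtop : δ ⊤ = ⊤)
    (star : D → D)
    (hstar : ∀ S, star S = δ (compl (ε S)))
    (S : D) :
    S ⊓ star S = ⊥ ↔ S = ⊤ ∨ S = ⊥ := by
  have hL : IsOrthomodular compl := ⟨h_inv, h_anti, h_nc, h_em, h_om⟩
  let _ : DistribLattice D := DistribLattice.ofInfSupLe fun x y z => (hdistr x y z).le
  have gc : GaloisConnection δ ε := hgc
  have gci : GaloisCoinsertion δ ε := gc.toGaloisCoinsertion fun a => (hεδ a).le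
  constructor
  · intro h
    have hdisj : Disjoint (δ (ε S)) (δ (compl (ε S))) := by
      rw [disjoint_iff, ← le_bot_iff, ← h, ← hstar]
      exact inf_le_inf_right _ (gc.l_u_le S)
    rcases eq_bot_or_eq_top_of_disjoint_map_compl hL hcenter gci hdisj with ha | ha
    · rw [hstar, ha, hL.compl_bot, hδtop, inf_top_eq] at h
      exact Or.inr h
    · exact Or.inl (top_le_iff.mp (hδtop ▸ ha ▸ gc.l_u_le S))
  · rintro (rfl | rfl)
    · rw [hstar, gc.u_top, hL.compl_top, gc.l_bot, inf_bot_eq]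
    · exact bot_inf_eq _

/-- Properly paraconsistent negation: for any `S`, `S ⊓ S* = ⊥` iff `S = ⊤ ∨ S = ⊥`,
under the hypothesis that the center of `L` is `{⊥, ⊤}`. -/
theorem stmt18 {L D : Type*} [CompleteLattice L] [CompleteLattice D]
    (compl : L → L)
    (h_inv : ∀ a, compl (compl a) = a)
    (h_anti : ∀ a b : L, a ≤ b → compl b ≤ compl a)
    (h_nc : ∀ a : L, a ⊓ compl a = ⊥)
    (h_em : ∀ a : L, a ⊔ compl a = ⊤)
    (h_om : ∀ a b : L, a ≤ b → b = a ⊔ (b ⊓ compl a))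
    (hcenter : ∀ a : L, (∀ x : L, a = (a ⊓ x) ⊔ (a ⊓ compl x)) → a = ⊥ ∨ a = ⊤)
    (hdistr : ∀ x y z : D, x ⊓ (y ⊔ z) = (x ⊓ y) ⊔ (x ⊓ z))
    (δ : L → D) (ε : D → L)
    (hgc : ∀ a S, δ a ≤ S ↔ a ≤ ε S)
    (hεδ : ∀ a, ε (δ a) = a)
    (hδinj : Function.Injective δ)
    (hεinf : ∀ S T : D, ε (S ⊓ T) = ε S ⊓ ε T)
    (hδtop : δ ⊤ = ⊤) (hδbot : δ ⊥ = ⊥)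
    (star : D → D)
    (hstar : ∀ S, star S = δ (compl (ε S)))
    (S : D) :
    S ⊓ star S = ⊥ ↔ S = ⊤ ∨ S = ⊥ :=
  stmt18_general compl h_inv h_anti h_nc h_em h_om hcenter hdistr δ ε hgc hεδ hδtop star hstar S
end
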